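/- arXiv:0903.5269 — 2 statements merged into one kernel-verified Lean document; each statement's English description precedes it below -/
import Mathlib

section
/- Let R ∈ 𝔯(V) be such that R* ∈ 𝔯(V) as well. Then: (1) π₈(R) = 0 and π₈(R*) = 0; (2) Ric(R)(y,z) − Ric(R)(z,y) = Ric*(R)(z,y) − Ric*(R)(y,z) for all y, z ∈ V; in particular Ric(R) is symmetric if and only if Ric*(R) is symmetric. -/
open scoped BigOperators
open Pointwise

namespace GCT

variable {V : Type*} [AddCommGroup V] [Module ℝ V]

/-- Linearity of a real valued function of one vector variable. -/
def IsLin (f : V → ℝ) : Prop :=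
  (∀ x y : V, f (x + y) = f x + f y) ∧ (∀ (c : ℝ) (x : V), f (c • x) = c * f x)

/-- Bilinearity. -/
def IsBilin (h : V → V → ℝ) : Prop :=
  (∀ y, IsLin (fun x => h x y)) ∧ (∀ x, IsLin (fun y => h x y))

/-- 4-linearity. -/
def IsMulti4 (F : V → V → V → V → ℝ) : Prop :=
  (∀ y z w, IsLin (fun x => F x y z w)) ∧ (∀ x z w, IsLin (fun y => F x y z w)) ∧
    (∀ x y w, IsLin (fun z => F x y z w)) ∧ (∀ x y z, IsLin (fun w => F x y z w))

/-- The space 𝔯(V) of generalized curvature tensors. -/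
def rSet (V : Type*) [AddCommGroup V] [Module ℝ V] : Set (V → V → V → V → ℝ) :=
  {F | IsMulti4 F ∧ (∀ x y z w, F x y z w = - F y x z w) ∧
    (∀ x y z w, F x y z w + F y z x w + F z x y w = 0)}

/-- The space 𝔞(V) of algebraic curvature tensors. -/
def aSet (V : Type*) [AddCommGroup V] [Module ℝ V] : Set (V → V → V → V → ℝ) :=
  {F | F ∈ rSet V ∧ ∀ x y z w, F x y z w = - F x y w z}

/-- The space 𝔰(V). -/
def sSet (V : Type*) [AddCommGroup V] [Module ℝ V] : Set (V → V → V → V → ℝ) :=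
  {F | F ∈ rSet V ∧ ∀ x y z w, F x y z w = F x y w z}

/-- The conjugate tensor R*. -/
def conj (F : V → V → V → V → ℝ) : V → V → V → V → ℝ := fun x y z w => - F x y w z

/-- The product h·k of two bilinear forms. -/
def prodB (h k : V → V → ℝ) : V → V → V → V → ℝ := fun x y z w => h x y * k z w

/-- The wedge product h ∧_t k of two bilinear forms. -/
def wedge (t : ℝ) (h k : V → V → ℝ) : V → V → V → V → ℝ :=
  fun x y z w => h x z * k y w - h y z * k x w - t * (h x w * k y z - h y w * k x z)

/-- Antisymmetric part Λh. -/
noncomputable def lamB (h : V → V → ℝ) : V → V → ℝ := fun x y => (h x y - h y x) / 2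

/-- Symmetric part Sh. -/
noncomputable def symB (h : V → V → ℝ) : V → V → ℝ := fun x y => (h x y + h y x) / 2

/-- The idempotent ψ. -/
noncomputable def psi (F : V → V → V → V → ℝ) : V → V → V → V → ℝ :=
  fun x y z w => (F x y z w + F y x w z + F z w x y + F w z y x) / 4

/-- The idempotent μ. -/
noncomputable def mu (F : V → V → V → V → ℝ) : V → V → V → V → ℝ :=
  fun x y z w =>
    (3 * F x y z w + 3 * F x y w z + F x w z y + F x z w y + F w y z x + F z y w x) / 8

/-- A linear equivalence is a g-isometry. -/
def IsIsometry (g : V → V → ℝ) (φ : V ≃ₗ[ℝ] V) : Prop := ∀ x y, g (φ x) (φ y) = g x y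

/-- Pull back of a 4-tensor along a linear equivalence (the natural action). -/
def pullT (φ : V ≃ₗ[ℝ] V) (F : V → V → V → V → ℝ) : V → V → V → V → ℝ :=
  fun x y z w => F (φ x) (φ y) (φ z) (φ w)

/-- Invariance of a set of 4-tensors under the orthogonal group O(V,g). -/
def OInv (g : V → V → ℝ) (S : Set (V → V → V → V → ℝ)) : Prop :=
  ∀ φ : V ≃ₗ[ℝ] V, IsIsometry g φ → ∀ F ∈ S, pullT φ F ∈ S

/-- Irreducibility of a subspace of 4-tensors as an O(V,g)-module:
there is no proper nonzero invariant subspace. -/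
def OIrred (g : V → V → ℝ) (W : Set (V → V → V → V → ℝ)) : Prop :=
  ∀ U : Submodule ℝ (V → V → V → V → ℝ), (U : Set (V → V → V → V → ℝ)) ⊆ W →
    (∀ φ : V ≃ₗ[ℝ] V, IsIsometry g φ → ∀ F ∈ U, pullT φ F ∈ U) →
    (U : Set (V → V → V → V → ℝ)) = {0} ∨ (U : Set (V → V → V → V → ℝ)) = W

/-- Isomorphism of two invariant subspaces as O(V,g)-modules. -/
def OEquivMod (g : V → V → ℝ) (S T : Set (V → V → V → V → ℝ)) : Prop :=
  ∃ e : (V → V → V → V → ℝ) →ₗ[ℝ] (V → V → V → V → ℝ),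
    Set.BijOn e S T ∧
      ∀ φ : V ≃ₗ[ℝ] V, IsIsometry g φ → ∀ F ∈ S, e (pullT φ F) = pullT φ (e F)

variable (n : ℕ) (b : Module.Basis (Fin n) ℝ V) (g : V → V → ℝ)

/-- Inverse metric components g^{ij}. -/
noncomputable def ginv : Matrix (Fin n) (Fin n) ℝ :=
  (Matrix.of fun i j => g (b i) (b j))⁻¹

/-- Ric(R)(x,y) := Σ g^{ij} R(e_i,x,y,e_j). -/
noncomputable def Ric (F : V → V → V → V → ℝ) : V → V → ℝ :=
  fun x y => ∑ i, ∑ j, ginv n b g i j * F (b i) x y (b j)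

/-- Ric*(R)(x,y) := Σ g^{ij} R(x,e_i,e_j,y). -/
noncomputable def RicS (F : V → V → V → V → ℝ) : V → V → ℝ :=
  fun x y => ∑ i, ∑ j, ginv n b g i j * F x (b i) (b j) y

/-- The generalized scalar curvature τ(R). -/
noncomputable def tau (F : V → V → V → V → ℝ) : ℝ :=
  ∑ i, ∑ j, ∑ k, ∑ l, ginv n b g i l * ginv n b g j k * F (b i) (b j) (b k) (b l)

/-- The g-trace of a bilinear form. -/
noncomputable def trg (h : V → V → ℝ) : ℝ := ∑ i, ∑ j, ginv n b g i j * h (b i) (b j)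

/-- The scalar product on 4-tensors given by full contraction with g. -/
noncomputable def inner4 (F T : V → V → V → V → ℝ) : ℝ :=
  ∑ i, ∑ j, ∑ k, ∑ l, ∑ i', ∑ j', ∑ k', ∑ l',
    ginv n b g i i' * ginv n b g j j' * ginv n b g k k' * ginv n b g l l' *
      F (b i) (b j) (b k) (b l) * T (b i') (b j') (b k') (b l')

/-- W-projection π₁. -/
noncomputable def pi1 (F : V → V → V → V → ℝ) : V → V → V → V → ℝ :=
  (-(tau n b g F) / ((n : ℝ) * ((n : ℝ) - 1))) • wedge 0 g g

/-- W-projection π₂. -/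
noncomputable def pi2 (F : V → V → V → V → ℝ) : V → V → V → V → ℝ :=
  ((1 : ℝ) / ((n : ℝ) - 1)) • wedge 0 (((tau n b g F) / (n : ℝ)) • g - symB (Ric n b g F)) g

/-- W-projection π₃. -/
noncomputable def pi3 (F : V → V → V → V → ℝ) : V → V → V → V → ℝ :=
  ((-1 : ℝ) / ((n : ℝ) + 1)) •
    ((2 : ℝ) • prodB (lamB (Ric n b g F)) g + wedge 0 (lamB (Ric n b g F)) g)

/-- W-projection π₄. -/
noncomputable def pi4 (F : V → V → V → V → ℝ) : V → V → V → V → ℝ :=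
  ((-1 : ℝ) / ((n : ℝ) ^ 2 - 4)) •
      ((2 : ℝ) • prodB (lamB (RicS n b g F)) g + wedge ((n : ℝ) + 1) (lamB (RicS n b g F)) g)
    - ((3 : ℝ) / (((n : ℝ) ^ 2 - 4) * ((n : ℝ) + 1))) •
      ((2 : ℝ) • prodB (lamB (Ric n b g F)) g + wedge ((n : ℝ) + 1) (lamB (Ric n b g F)) g)

/-- W-projection π₅. -/
noncomputable def pi5 (F : V → V → V → V → ℝ) : V → V → V → V → ℝ :=
  ((1 : ℝ) / (((n : ℝ) - 1) * ((n : ℝ) - 2))) •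
    ((tau n b g F) • wedge 0 g g -
      ((1 : ℝ) / (n : ℝ)) •
        wedge ((n : ℝ) - 1) (symB (Ric n b g F + ((n : ℝ) - 1) • RicS n b g F)) g)

/-- W-projection π₆. -/
noncomputable def pi6 (F : V → V → V → V → ℝ) : V → V → V → V → ℝ :=
  psi F + ((1 : ℝ) / (2 * ((n : ℝ) - 2))) • wedge 1 (symB (Ric n b g F + RicS n b g F)) g
    - ((tau n b g F) / (((n : ℝ) - 1) * ((n : ℝ) - 2))) • wedge 0 g g

/-- W-projection π₇. -/
noncomputable def pi7 (F : V → V → V → V → ℝ) : V → V → V → V → ℝ :=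
  mu F + ((1 : ℝ) / (2 * (n : ℝ))) • wedge (-1) (symB (Ric n b g F - RicS n b g F)) g
    + ((1 : ℝ) / (2 * ((n : ℝ) + 2))) • prodB (lamB ((3 : ℝ) • Ric n b g F - RicS n b g F)) g
    + ((1 : ℝ) / (4 * ((n : ℝ) + 2))) • wedge (-1) (lamB ((3 : ℝ) • Ric n b g F - RicS n b g F)) g

/-- W-projection π₈. -/
noncomputable def pi8 (F : V → V → V → V → ℝ) : V → V → V → V → ℝ :=
  F - psi F - mu F
    + ((1 : ℝ) / (2 * ((n : ℝ) - 2))) • prodB (lamB (Ric n b g F + RicS n b g F)) g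
    + ((1 : ℝ) / (4 * ((n : ℝ) - 2))) • wedge 3 (lamB (Ric n b g F + RicS n b g F)) g

/-- A-projection α₁. -/
noncomputable def al1 (F : V → V → V → V → ℝ) : V → V → V → V → ℝ :=
  (-(tau n b g F) / ((n : ℝ) * ((n : ℝ) - 1))) • wedge 0 g g

/-- A-projection α₂. -/
noncomputable def al2 (F : V → V → V → V → ℝ) : V → V → V → V → ℝ :=
  ((-1 : ℝ) / (2 * ((n : ℝ) - 2))) • wedge 1 (symB (Ric n b g F + RicS n b g F)) g
    + ((2 * tau n b g F) / ((n : ℝ) * ((n : ℝ) - 2))) • wedge 0 g g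

/-- A-projection α₃. -/
noncomputable def al3 (F : V → V → V → V → ℝ) : V → V → V → V → ℝ :=
  ((-1 : ℝ) / (2 * (n : ℝ))) • wedge (-1) (symB (Ric n b g F - RicS n b g F)) g

/-- A-projection α₄. -/
noncomputable def al4 (F : V → V → V → V → ℝ) : V → V → V → V → ℝ :=
  ((-1 : ℝ) / (4 * ((n : ℝ) + 2))) •
    ((2 : ℝ) • prodB (lamB ((3 : ℝ) • Ric n b g F - RicS n b g F)) g
      + wedge (-1) (lamB ((3 : ℝ) • Ric n b g F - RicS n b g F)) g)

/-- A-projection α₅. -/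
noncomputable def al5 (F : V → V → V → V → ℝ) : V → V → V → V → ℝ :=
  ((-1 : ℝ) / (4 * ((n : ℝ) - 2))) •
    ((2 : ℝ) • prodB (lamB (Ric n b g F + RicS n b g F)) g
      + wedge 3 (lamB (Ric n b g F + RicS n b g F)) g)

/-- A-projection α₆. -/
noncomputable def al6 (F : V → V → V → V → ℝ) : V → V → V → V → ℝ :=
  psi F - al1 n b g F - al2 n b g F

/-- A-projection α₇. -/
noncomputable def al7 (F : V → V → V → V → ℝ) : V → V → V → V → ℝ :=
  mu F - al3 n b g F - al4 n b g F

/-- A-projection α₈. -/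
noncomputable def al8 (F : V → V → V → V → ℝ) : V → V → V → V → ℝ :=
  F - mu F - psi F - al5 n b g F

/-- Curvature tensors of constant curvature type. -/
noncomputable def uSet : Set (V → V → V → V → ℝ) :=
  {F | ∃ c : ℝ, ∀ x y z w, F x y z w = c * (g x w * g y z - g x z * g y w)}

/-- Ricci traceless algebraic curvature tensors built from a traceless symmetric form. -/
noncomputable def zSet : Set (V → V → V → V → ℝ) :=
  {F | ∃ Xi : V → V → ℝ, IsBilin Xi ∧ (∀ x y, Xi x y = Xi y x) ∧ trg n b g Xi = 0 ∧
    ∀ x y z w, F x y z w = Xi x w * g y z + g x w * Xi y z - Xi x z * g y w - g x z * Xi y w}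

/-- Weyl type (Ricci flat algebraic) curvature tensors. -/
noncomputable def wSet : Set (V → V → V → V → ℝ) :=
  {F | F ∈ aSet V ∧ Ric n b g F = fun _ _ => 0}

/-- The projective curvature tensor p(R). -/
noncomputable def pProj (F : V → V → V → V → ℝ) : V → V → V → V → ℝ :=
  F - pi1 n b g F - pi2 n b g F - pi3 n b g F

end GCT

/-!
Contracting the first Bianchi identity of `R` over its last two slots expresses that trace
as `Ric(z,y) - Ric(y,z)`; for `R*` the same trace changes sign while `Ric(R*) = Ric*(R)`, so
`Ric + Ric*` is symmetric and the `Λ(Ric + Ric*)` terms of `π₈` vanish. What is left of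
`π₈(R)` is `R - ψ(R) - μ(R)`, which vanishes because the Bianchi identities of `R` and `R*`
together make `R = ψ(R) + μ(R)` an identity in the entries of `R`.
-/

namespace GCT

variable {V : Type*}

lemma conj_conj (F : V → V → V → V → ℝ) : conj (conj F) = F := by
  funext x y z w
  simp only [conj, neg_neg]

lemma prodB_zero_left (k : V → V → ℝ) : prodB (fun _ _ => (0 : ℝ)) k = 0 := by
  funext x y z w
  simp only [prodB, zero_mul, Pi.zero_apply]

lemma wedge_zero_left (t : ℝ) (k : V → V → ℝ) : wedge t (fun _ _ => (0 : ℝ)) k = 0 := by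
  funext x y z w
  simp only [wedge, zero_mul, sub_zero, mul_zero, Pi.zero_apply]

lemma lamB_eq_zero_of_symm {h : V → V → ℝ} (hs : ∀ x y, h x y = h y x) :
    lamB h = fun _ _ => 0 := by
  funext x y
  simp only [lamB, hs x y, sub_self, zero_div]

variable [AddCommGroup V] [Module ℝ V]

lemma eq_psi_add_mu {F : V → V → V → V → ℝ} (hF : F ∈ rSet V) (hcF : conj F ∈ rSet V)
    (x y z w : V) : F x y z w = psi F x y z w + mu F x y z w := by
  obtain ⟨-, ha, hB1⟩ := hF
  obtain ⟨-, -, hcB1⟩ := hcF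
  simp only [conj] at hcB1
  simp only [psi, mu]
  linear_combination (3/8 : ℝ) * ha x y z w + (1/4 : ℝ) * hcB1 x y z w
    - (1/8 : ℝ) * ha x y w z + (1/4 : ℝ) * ha x z y w + (1/8 : ℝ) * hcB1 x z y w
    + (1/4 : ℝ) * ha x z w y - (1/4 : ℝ) * hB1 x z w y + (1/4 : ℝ) * hcB1 x z w y
    + (1/4 : ℝ) * ha x w y z + (3/8 : ℝ) * hcB1 x w y z + (1/4 : ℝ) * ha x w z y
    + (1/4 : ℝ) * hcB1 x w z y + (1/4 : ℝ) * hB1 y z w x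

variable (n : ℕ) (b : Module.Basis (Fin n) ℝ V) (g : V → V → ℝ)

noncomputable def contract34 (F : V → V → V → V → ℝ) (x y : V) : ℝ :=
  ∑ i, ∑ j, ginv n b g i j * F x y (b i) (b j)

lemma ginv_symm (hgs : ∀ x y, g x y = g y x) (i j : Fin n) :
    ginv n b g i j = ginv n b g j i := by
  have hsymm :
      (Matrix.of fun i j => g (b i) (b j)).transpose = Matrix.of fun i j => g (b i) (b j) := by
    ext i j
    exact hgs (b j) (b i)
  change _ = ((Matrix.of fun i j => g (b i) (b j))⁻¹).transpose i j
  rw [Matrix.transpose_nonsing_inv, hsymm]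
  rfl

lemma Ric_conj {F : V → V → V → V → ℝ} (ha : ∀ x y z w, F x y z w = - F y x z w) :
    Ric n b g (conj F) = RicS n b g F := by
  funext x y
  simp only [Ric, RicS, conj, ha (b _) x]
  ring_nf

lemma contract34_eq_Ric_sub {F : V → V → V → V → ℝ} (hF : F ∈ rSet V) (y z : V) :
    contract34 n b g F y z = Ric n b g F z y - Ric n b g F y z := by
  obtain ⟨-, ha, hB1⟩ := hF
  have hcontr : ∑ i, ∑ j, ginv n b g i j *
      (F (b i) y z (b j) + F y z (b i) (b j) + F z (b i) y (b j)) = 0 :=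
    Finset.sum_eq_zero fun i _ => Finset.sum_eq_zero fun j _ => by rw [hB1, mul_zero]
  simp only [ha z (b _), mul_add, mul_neg, Finset.sum_add_distrib,
    Finset.sum_neg_distrib] at hcontr
  simp only [contract34, Ric]
  linarith

lemma contract34_conj (hgs : ∀ x y, g x y = g y x) (F : V → V → V → V → ℝ) (y z : V) :
    contract34 n b g (conj F) y z = - contract34 n b g F y z := by
  simp only [contract34, conj, mul_neg, Finset.sum_neg_distrib]
  rw [Finset.sum_comm]
  simp only [ginv_symm n b g hgs]

lemma Ric_add_RicS_symm (hgs : ∀ x y, g x y = g y x) {F : V → V → V → V → ℝ}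
    (hF : F ∈ rSet V) (hcF : conj F ∈ rSet V) (y z : V) :
    Ric n b g F y z + RicS n b g F y z = Ric n b g F z y + RicS n b g F z y := by
  have hR := contract34_eq_Ric_sub n b g hF y z
  have hRc := contract34_eq_Ric_sub n b g hcF y z
  rw [contract34_conj n b g hgs, Ric_conj n b g hF.2.1] at hRc
  linarith

lemma pi8_eq_zero (hgs : ∀ x y, g x y = g y x) {F : V → V → V → V → ℝ}
    (hF : F ∈ rSet V) (hcF : conj F ∈ rSet V) : pi8 n b g F = 0 := by
  have hlam : lamB (Ric n b g F + RicS n b g F) = fun _ _ => 0 :=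
    lamB_eq_zero_of_symm (Ric_add_RicS_symm n b g hgs hF hcF)
  funext x y z w
  simp only [pi8, hlam, prodB_zero_left, wedge_zero_left, smul_zero, add_zero,
    Pi.sub_apply, Pi.zero_apply, eq_psi_add_mu hF hcF x y z w]
  ring

theorem stmt4_general {V : Type*} [AddCommGroup V] [Module ℝ V]
    (n : ℕ) (b : Module.Basis (Fin n) ℝ V)
    (g : V → V → ℝ) (hgs : ∀ x y, g x y = g y x) :
    ∀ F ∈ rSet V, conj F ∈ rSet V →
      pi8 n b g F = 0 ∧ pi8 n b g (conj F) = 0 ∧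
      (∀ y z, Ric n b g F y z - Ric n b g F z y = RicS n b g F z y - RicS n b g F y z) ∧
      ((∀ y z, Ric n b g F y z = Ric n b g F z y) ↔
        (∀ y z, RicS n b g F y z = RicS n b g F z y)) := by
  intro F hF hcF
  have hsymm := Ric_add_RicS_symm n b g hgs hF hcF
  refine ⟨pi8_eq_zero n b g hgs hF hcF,
    pi8_eq_zero n b g hgs hcF (by rwa [conj_conj]),
    fun y z => by linarith [hsymm y z], ?_⟩
  constructor
  · intro h y z
    linarith [hsymm y z, h y z]
  · intro h y z
    linarith [hsymm y z, h y z]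

theorem stmt4 {V : Type*} [AddCommGroup V] [Module ℝ V]
    (n : ℕ) (hn : 3 ≤ n) (b : Module.Basis (Fin n) ℝ V)
    (g : V → V → ℝ) (hgb : IsBilin g) (hgs : ∀ x y, g x y = g y x)
    (hgnd : ∀ x : V, (∀ y : V, g x y = 0) → x = 0) :
    ∀ F ∈ rSet V, conj F ∈ rSet V →
      pi8 n b g F = 0 ∧ pi8 n b g (conj F) = 0 ∧
      (∀ y z, Ric n b g F y z - Ric n b g F z y = RicS n b g F z y - RicS n b g F y z) ∧
      ((∀ y z, Ric n b g F y z = Ric n b g F z y) ↔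
        (∀ y z, RicS n b g F y z = RicS n b g F z y)) :=
  stmt4_general n b g hgs

end GCT
end

section
/- For every R ∈ 𝔯(V), writing Ric := Ric(R), Ric* := Ric*(R), τ := τ(R): (1) π₁(R) = 0 if and only if τ = 0; (2) π₂(R) = 0 if and only if S Ric = (τ/n) g; (3) π₃(R) = 0 if and only if Ric is symmetric; (4) π₄(R) = 0 if and only if Λ(Ric* + (3/(n+1)) Ric) = 0; (5) π₅(R) = 0 if and only if S((1/(n−1)) Ric + Ric*) = (τ/(n−1)) g. -/
open scoped BigOperators
open Pointwise

namespace GCT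

variable {V : Type*} [AddCommGroup V] [Module ℝ V]

variable (n : ℕ) (b : Module.Basis (Fin n) ℝ V) (g : V → V → ℝ)

/-!
Each `πᵢ(R)` is a nonzero multiple of `h ∧ₜ g` (`i = 1, 2, 5`) or of `2 h·g + h ∧ₜ g` (`i = 3, 4`)
for a bilinear form `h` built from `Ric`, `Ric*`, `τ` and `g`, and the right-hand side of each
equivalence says exactly `h = 0` (for `π₁`, `h = τ g`). Everything thus reduces to injectivity of
`h ↦ h ∧ₜ g` on symmetric forms (`t ≠ ±1`) and of `h ↦ 2 h·g + h ∧ₜ g` on antisymmetric forms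
(`t ≠ 3, -1`), which follows by evaluating on well-chosen arguments and using the
nondegeneracy of `g`.
-/

lemma lamB_eq_zero_iff {α : Type*} {h : α → α → ℝ} : lamB h = 0 ↔ ∀ x y, h x y = h y x := by
  simp only [funext_iff, lamB, Pi.zero_apply, div_eq_zero_iff, sub_eq_zero]
  norm_num

section Wedge

variable {V : Type*} [AddCommGroup V] {g : V → V → ℝ}

/-- Evaluating at `(x, y, z, y)` and `(x, y, y, z)` gives `(t - 3)(t + 1) L(x, y) g(y, z) = 0`. -/
lemma two_smul_prodB_add_wedge_eq_zero_iff (hgs : ∀ x y, g x y = g y x)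
    (hnd : ∀ x : V, (∀ y : V, g x y = 0) → x = 0) {t : ℝ} (ht₃ : t ≠ 3) (ht : t ≠ -1)
    {L : V → V → ℝ} (hLd : ∀ u, L u u = 0) (hL0 : ∀ x, L x 0 = 0) :
    (2 : ℝ) • prodB L g + wedge t L g = 0 ↔ L = 0 := by
  refine ⟨fun H => ?_, fun H => by funext x y z w; simp [H, prodB, wedge]⟩
  funext x y
  rcases eq_or_ne y 0 with rfl | hy
  · exact hL0 x
  obtain ⟨z, hz⟩ := not_forall.mp (mt (hnd y) hy)
  have e₁ := congrFun (congr_fun₃ H x y z) y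
  have e₂ := congrFun (congr_fun₃ H x y y) z
  simp only [Pi.add_apply, Pi.smul_apply, Pi.zero_apply, smul_eq_mul, prodB, wedge, hLd,
    hgs z y] at e₁ e₂
  have hprod : ((t - 3) * (t + 1)) * (L x y * g y z) = 0 := by
    linear_combination -t * e₁ - e₂
  have ht' : (t - 3) * (t + 1) ≠ 0 :=
    mul_ne_zero (sub_ne_zero.mpr ht₃) (by contrapose! ht; linarith)
  exact (mul_eq_zero.mp ((mul_eq_zero.mp hprod).resolve_left ht')).resolve_right hz

variable [Module ℝ V]

lemma IsLin.map_zero {f : V → ℝ} (hf : IsLin f) : f 0 = 0 := by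
  simpa using hf.2 0 0

lemma IsBilin.apply_sub_smul_left (hg : IsBilin g) (x y w : V) (c : ℝ) :
    g (y - c • x) w = g y w - c * g x w := by
  have hadd := (hg.1 w).1 y (-c • x)
  have hsmul := (hg.1 w).2 (-c) x
  simp only at hadd hsmul
  rw [sub_eq_add_neg, ← neg_smul, hadd, hsmul]
  ring

/-- If `h(x, z) ≠ 0`, then `h ∧₀ g = 0` forces every `g(y, ·)` to be a multiple of `g(x, ·)`,
so `V` would be spanned by `x`. -/
lemma wedge_zero_eq_zero_iff (hV : 1 < Module.finrank ℝ V) (hgb : IsBilin g)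
    (hnd : ∀ x : V, (∀ y : V, g x y = 0) → x = 0) {h : V → V → ℝ} :
    wedge 0 h g = 0 ↔ h = 0 := by
  refine ⟨fun H => ?_, fun H => by funext x y z w; simp [H, wedge]⟩
  funext x z
  by_contra hxz
  change h x z ≠ 0 at hxz
  refine hV.not_ge (finrank_le_one x fun y => ⟨h y z / h x z, ?_⟩)
  refine (sub_eq_zero.mp (hnd _ fun w => ?_)).symm
  have hw := congrFun (congr_fun₃ H x y z) w
  simp only [wedge, Pi.zero_apply, zero_mul, sub_zero] at hw
  rw [hgb.apply_sub_smul_left, sub_eq_zero, div_mul_eq_mul_div, eq_div_iff hxz]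
  linear_combination hw

lemma wedge_zero_self_ne_zero (hV : 1 < Module.finrank ℝ V) (hgb : IsBilin g)
    (hnd : ∀ x : V, (∀ y : V, g x y = 0) → x = 0) : wedge 0 g g ≠ 0 := by
  intro H
  have hg := (wedge_zero_eq_zero_iff hV hgb hnd).mp H
  refine hV.not_ge (finrank_le_one 0 fun y => ⟨0, ?_⟩)
  simp [hnd y fun w => by simp [hg]]

/-- Comparing `(h ∧ₜ g)(x, y, z, w)` with `(h ∧ₜ g)(z, w, x, y)` shows
`h(y, z) g(x, w) = h(x, w) g(y, z)` when `t ≠ 1`, and then `h ∧ₜ g = (1 + t) (h ∧₀ g)`. -/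
lemma wedge_eq_zero_iff_of_symm (hV : 1 < Module.finrank ℝ V) (hgb : IsBilin g)
    (hgs : ∀ x y, g x y = g y x) (hnd : ∀ x : V, (∀ y : V, g x y = 0) → x = 0) {t : ℝ}
    (ht₁ : t ≠ 1) (ht : t ≠ -1) {h : V → V → ℝ} (hs : ∀ x y, h x y = h y x) :
    wedge t h g = 0 ↔ h = 0 := by
  refine ⟨fun H => ?_, fun H => by funext x y z w; simp [H, wedge]⟩
  have hswap x y z w : h y z * g x w = h x w * g y z := by
    have e := congrFun (congr_fun₃ H x y z) w
    have e' := congrFun (congr_fun₃ H z w x) y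
    simp only [wedge, Pi.zero_apply, hs z, hs w, hgs w, hgs z] at e e'
    have hprod : (t - 1) * (h y z * g x w - h x w * g y z) = 0 := by
      linear_combination e - e'
    linear_combination (mul_eq_zero.mp hprod).resolve_left (sub_ne_zero.mpr ht₁)
  have hwedge : wedge t h g = (1 + t) • wedge 0 h g := by
    funext x y z w
    simp only [wedge, Pi.smul_apply, smul_eq_mul]
    linear_combination t * hswap x y z w + t * hswap x y w z
  rw [hwedge, smul_eq_zero_iff_right (by contrapose! ht; linarith)] at H
  exact (wedge_zero_eq_zero_iff hV hgb hnd).mp H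

end Wedge

section Projections

variable {V : Type*} [AddCommGroup V] [Module ℝ V] {n : ℕ} {b : Module.Basis (Fin n) ℝ V}
  {g : V → V → ℝ} {F : V → V → V → V → ℝ}

lemma Ric_zero_left (hF : IsMulti4 F) (x : V) : Ric n b g F 0 x = 0 :=
  Finset.sum_eq_zero fun _ _ => Finset.sum_eq_zero fun _ _ =>
    mul_eq_zero_of_right _ (hF.2.1 _ _ _).map_zero

lemma Ric_zero_right (hF : IsMulti4 F) (x : V) : Ric n b g F x 0 = 0 :=
  Finset.sum_eq_zero fun _ _ => Finset.sum_eq_zero fun _ _ =>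
    mul_eq_zero_of_right _ (hF.2.2.1 _ _ _).map_zero

lemma RicS_zero_left (hF : IsMulti4 F) (x : V) : RicS n b g F 0 x = 0 :=
  Finset.sum_eq_zero fun _ _ => Finset.sum_eq_zero fun _ _ =>
    mul_eq_zero_of_right _ (hF.1 _ _ _).map_zero

lemma RicS_zero_right (hF : IsMulti4 F) (x : V) : RicS n b g F x 0 = 0 :=
  Finset.sum_eq_zero fun _ _ => Finset.sum_eq_zero fun _ _ =>
    mul_eq_zero_of_right _ (hF.2.2.2 _ _ _).map_zero

lemma pi4_eq : pi4 n b g F = ((-1 : ℝ) / ((n : ℝ) ^ 2 - 4)) •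
    ((2 : ℝ) • prodB (lamB (RicS n b g F + ((3 : ℝ) / ((n : ℝ) + 1)) • Ric n b g F)) g +
      wedge ((n : ℝ) + 1) (lamB (RicS n b g F + ((3 : ℝ) / ((n : ℝ) + 1)) • Ric n b g F)) g) := by
  funext x y z w
  simp only [pi4, ← div_div, prodB, wedge, lamB, Pi.add_apply, Pi.sub_apply, Pi.smul_apply,
    smul_eq_mul]
  ring

lemma pi5_eq (hn : 2 ≤ n) : pi5 n b g F = ((-1 : ℝ) / ((n : ℝ) * ((n : ℝ) - 2))) •
    wedge ((n : ℝ) - 1) (symB (((1 : ℝ) / ((n : ℝ) - 1)) • Ric n b g F + RicS n b g F)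
      - (tau n b g F / ((n : ℝ) - 1)) • g) g := by
  have hn₀ : (n : ℝ) ≠ 0 := by positivity
  have hn₁ : (n : ℝ) - 1 ≠ 0 := sub_ne_zero.mpr (by norm_cast; omega)
  funext x y z w
  simp only [pi5, wedge, symB, Pi.add_apply, Pi.sub_apply, Pi.smul_apply, smul_eq_mul]
  field_simp
  ring

end Projections

theorem stmt9 {V : Type*} [AddCommGroup V] [Module ℝ V]
    (n : ℕ) (hn : 3 ≤ n) (b : Module.Basis (Fin n) ℝ V)
    (g : V → V → ℝ) (hgb : IsBilin g) (hgs : ∀ x y, g x y = g y x)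
    (hgnd : ∀ x : V, (∀ y : V, g x y = 0) → x = 0) :
    ∀ F ∈ rSet V,
      (pi1 n b g F = 0 ↔ tau n b g F = 0) ∧
      (pi2 n b g F = 0 ↔ symB (Ric n b g F) = ((tau n b g F) / (n : ℝ)) • g) ∧
      (pi3 n b g F = 0 ↔ ∀ x y, Ric n b g F x y = Ric n b g F y x) ∧
      (pi4 n b g F = 0 ↔
        lamB (RicS n b g F + ((3 : ℝ) / ((n : ℝ) + 1)) • Ric n b g F) = 0) ∧
      (pi5 n b g F = 0 ↔
        symB (((1 : ℝ) / ((n : ℝ) - 1)) • Ric n b g F + RicS n b g F)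
          = ((tau n b g F) / ((n : ℝ) - 1)) • g) := by
  rintro F ⟨hF, -, -⟩
  have hV : 1 < Module.finrank ℝ V := by
    rw [Module.finrank_eq_card_basis b, Fintype.card_fin]; omega
  have hn' : (3 : ℝ) ≤ n := by exact_mod_cast hn
  refine ⟨?_, ?_, ?_, ?_, ?_⟩
  · rw [pi1, smul_eq_zero_iff_left (wedge_zero_self_ne_zero hV hgb hgnd), div_eq_zero_iff,
      neg_eq_zero, or_iff_left (mul_ne_zero (by linarith) (by linarith))]
  · rw [pi2, smul_eq_zero_iff_right (one_div_ne_zero (by linarith)),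
      wedge_zero_eq_zero_iff hV hgb hgnd, sub_eq_zero, eq_comm]
  · rw [pi3, smul_eq_zero_iff_right (div_ne_zero (by norm_num) (by positivity)),
      two_smul_prodB_add_wedge_eq_zero_iff hgs hgnd (by norm_num) (by norm_num)
        (fun u => by simp [lamB]) (fun x => by simp [lamB, Ric_zero_left hF, Ric_zero_right hF]),
      lamB_eq_zero_iff]
  · rw [pi4_eq, smul_eq_zero_iff_right (div_ne_zero (by norm_num) (by nlinarith)),
      two_smul_prodB_add_wedge_eq_zero_iff hgs hgnd (by linarith) (by linarith)
        (fun u => by simp [lamB])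
        (fun x => by simp [lamB, Ric_zero_left hF, Ric_zero_right hF, RicS_zero_left hF,
          RicS_zero_right hF])]
  · rw [pi5_eq (by omega), smul_eq_zero_iff_right
        (div_ne_zero (by norm_num) (mul_ne_zero (by linarith) (by linarith))),
      wedge_eq_zero_iff_of_symm hV hgb hgs hgnd (by linarith) (by linarith)
        (fun x y => by simp only [Pi.sub_apply, Pi.smul_apply, symB, hgs x y]; ring),
      sub_eq_zero]

end GCT
end
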